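/- Fix t > 0 and two nonnegative kernels defining weighted operators I₁ and I₂ on (0,t) (each of the form f ↦ ∫₀ᵗ τ^k F_i(t,τ) f(τ) dτ). Let f and g be synchronous on [0,∞) and r, p, q : [0,∞) → [0,∞) nonnegative. Then: I₁[r]·(I₁[q]·I₂[p·f·g] + 2·I₁[p]·I₂[q·f·g] + I₂[q]·I₁[p·f·g]) + (I₁[p]·I₂[q] + I₂[p]·I₁[q])·I₁[r·f·g] ≥ I₁[r]·(I₁[p·f]·I₂[q·g] + I₂[q·f]·I₁[p·g]) + I₁[p]·(I₁[r·f]·I₂[q·g] + I₂[q·f]·I₁[r·g]) + I₁[q]·(I₁[r·f]·I₂[p·g] + I₂[p·f]·I₁[r·g]). -/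

import Mathlib

open MeasureTheory

/-- Weighted integral operator `I[φ] = ∫₀ᵗ τ^k F(τ) φ(τ) dτ`. -/
noncomputable def wInt (k t : ℝ) (F φ : ℝ → ℝ) : ℝ :=
  ∫ τ in (0:ℝ)..t, τ ^ k * F τ * φ τ

/-- Integrability of the weighted integrand. -/
def wIntble (k t : ℝ) (F φ : ℝ → ℝ) : Prop :=
  IntervalIntegrable (fun τ => τ ^ k * F τ * φ τ) volume 0 t

/-! For nonnegative weights `a`, `b` and synchronous `f`, `g`, integrating
`a(u) b(v) (f u - f v)(g u - g v) ≥ 0` first in `v` and then in `u` gives the two-kernel Chebyshev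
inequality `I₁[af] I₂[bg] + I₂[bf] I₁[ag] ≤ I₁[a] I₂[bfg] + I₂[b] I₁[afg]`. The theorem is the sum
of its instances for the weight pairs `(p, q)`, `(r, q)`, `(r, p)`, multiplied by the nonnegative
`I₁[r]`, `I₁[p]`, `I₁[q]` respectively. -/

open Set

section Chebyshev

variable {α : Type*} [MeasurableSpace α] {μ : Measure α} {w a b f g : α → ℝ}

theorem integral_mul_sub_sub_add (c₀ c₁ c₂ c₃ : ℝ) (hw : Integrable w μ)
    (hwf : Integrable (fun x => w x * f x) μ) (hwg : Integrable (fun x => w x * g x) μ)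
    (hwfg : Integrable (fun x => w x * f x * g x) μ) :
    ∫ x, w x * (c₀ - c₁ * f x - c₂ * g x + c₃ * (f x * g x)) ∂μ =
      c₀ * ∫ x, w x ∂μ - c₁ * ∫ x, w x * f x ∂μ - c₂ * ∫ x, w x * g x ∂μ +
        c₃ * ∫ x, w x * f x * g x ∂μ := by
  have hsplit : (fun x => w x * (c₀ - c₁ * f x - c₂ * g x + c₃ * (f x * g x))) = fun x =>
      c₀ * w x - c₁ * (w x * f x) - c₂ * (w x * g x) + c₃ * (w x * f x * g x) := by
    funext x; ring
  rw [hsplit, integral_add, integral_sub, integral_sub]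
  · simp only [integral_const_mul]
  all_goals fun_prop

theorem integral_weighted_chebyshev (ha : 0 ≤ᵐ[μ] a) (hb : 0 ≤ᵐ[μ] b)
    (hsync : ∀ᵐ u ∂μ, ∀ᵐ v ∂μ, 0 ≤ (f u - f v) * (g u - g v))
    (ha₁ : Integrable a μ) (haf : Integrable (fun x => a x * f x) μ)
    (hag : Integrable (fun x => a x * g x) μ) (hafg : Integrable (fun x => a x * f x * g x) μ)
    (hb₁ : Integrable b μ) (hbf : Integrable (fun x => b x * f x) μ)
    (hbg : Integrable (fun x => b x * g x) μ) (hbfg : Integrable (fun x => b x * f x * g x) μ) :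
    (∫ x, a x * f x ∂μ) * (∫ x, b x * g x ∂μ) + (∫ x, b x * f x ∂μ) * (∫ x, a x * g x ∂μ) ≤
      (∫ x, a x ∂μ) * (∫ x, b x * f x * g x ∂μ) + (∫ x, b x ∂μ) * (∫ x, a x * f x * g x ∂μ) := by
  have hinner : ∀ᵐ u ∂μ, 0 ≤ (∫ x, b x * f x * g x ∂μ) - (∫ x, b x * g x ∂μ) * f u -
      (∫ x, b x * f x ∂μ) * g u + (∫ x, b x ∂μ) * (f u * g u) := by
    filter_upwards [hsync] with u hu
    have hexpand := integral_mul_sub_sub_add (μ := μ) (f u * g u) (g u) (f u) 1 hb₁ hbf hbg hbfg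
    have hnonneg : 0 ≤ ∫ v, b v * ((f u - f v) * (g u - g v)) ∂μ :=
      integral_nonneg_of_ae <| by
        filter_upwards [hb, hu] with v hbv huv using mul_nonneg hbv huv
    have hfactor : ∫ v, b v * ((f u - f v) * (g u - g v)) ∂μ =
        ∫ v, b v * (f u * g u - g u * f v - f u * g v + 1 * (f v * g v)) ∂μ := by
      congr 1; funext v; ring
    linarith
  have houter := integral_nonneg_of_ae (μ := μ) <| by
    filter_upwards [ha, hinner] with u hau hu using mul_nonneg hau hu
  rw [integral_mul_sub_sub_add _ _ _ _ ha₁ haf hag hafg] at houter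
  linarith

end Chebyshev

section WeightedIntegral

variable {k t : ℝ} {F φ : ℝ → ℝ}

theorem wInt_eq_setIntegral_Ioo (ht : 0 ≤ t) :
    wInt k t F φ = ∫ τ in Ioo 0 t, τ ^ k * F τ * φ τ := by
  rw [wInt, intervalIntegral.integral_of_le ht, integral_Ioc_eq_integral_Ioo]

theorem wIntble_iff_integrableOn_Ioo (ht : 0 ≤ t) :
    wIntble k t F φ ↔ IntegrableOn (fun τ => τ ^ k * F τ * φ τ) (Ioo 0 t) :=
  intervalIntegrable_iff_integrableOn_Ioo_of_le ht

theorem wInt_integrand_nonneg (hF : ∀ τ ∈ Ioo 0 t, 0 ≤ F τ) (hφ : ∀ τ ∈ Ioo 0 t, 0 ≤ φ τ) :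
    ∀ τ ∈ Ioo 0 t, 0 ≤ τ ^ k * F τ * φ τ := fun τ hτ =>
  mul_nonneg (mul_nonneg (Real.rpow_nonneg hτ.1.le k) (hF τ hτ)) (hφ τ hτ)

theorem wInt_nonneg (ht : 0 ≤ t) (hF : ∀ τ ∈ Ioo 0 t, 0 ≤ F τ) (hφ : ∀ τ ∈ Ioo 0 t, 0 ≤ φ τ) :
    0 ≤ wInt k t F φ := by
  rw [wInt_eq_setIntegral_Ioo ht]
  exact setIntegral_nonneg measurableSet_Ioo (wInt_integrand_nonneg hF hφ)

theorem wInt_chebyshev {F₁ F₂ f g a b : ℝ → ℝ} (ht : 0 ≤ t)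
    (hF₁ : ∀ τ ∈ Ioo 0 t, 0 ≤ F₁ τ) (hF₂ : ∀ τ ∈ Ioo 0 t, 0 ≤ F₂ τ)
    (hsync : ∀ u ∈ Ioo 0 t, ∀ v ∈ Ioo 0 t, 0 ≤ (f u - f v) * (g u - g v))
    (ha : ∀ τ ∈ Ioo 0 t, 0 ≤ a τ) (hb : ∀ τ ∈ Ioo 0 t, 0 ≤ b τ)
    (ha₁ : wIntble k t F₁ a) (haf : wIntble k t F₁ (fun τ => a τ * f τ))
    (hag : wIntble k t F₁ (fun τ => a τ * g τ)) (hafg : wIntble k t F₁ (fun τ => a τ * f τ * g τ))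
    (hb₁ : wIntble k t F₂ b) (hbf : wIntble k t F₂ (fun τ => b τ * f τ))
    (hbg : wIntble k t F₂ (fun τ => b τ * g τ)) (hbfg : wIntble k t F₂ (fun τ => b τ * f τ * g τ)) :
    wInt k t F₁ (fun τ => a τ * f τ) * wInt k t F₂ (fun τ => b τ * g τ) +
        wInt k t F₂ (fun τ => b τ * f τ) * wInt k t F₁ (fun τ => a τ * g τ) ≤
      wInt k t F₁ a * wInt k t F₂ (fun τ => b τ * f τ * g τ) +
        wInt k t F₂ b * wInt k t F₁ (fun τ => a τ * f τ * g τ) := by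
  have hIoo {P : ℝ → Prop} (h : ∀ τ ∈ Ioo 0 t, P τ) : ∀ᵐ τ ∂volume.restrict (Ioo 0 t), P τ :=
    ae_restrict_of_forall_mem measurableSet_Ioo h
  simp only [wIntble_iff_integrableOn_Ioo ht, ← mul_assoc]
    at ha₁ haf hag hafg hb₁ hbf hbg hbfg
  simp only [wInt_eq_setIntegral_Ioo ht, ← mul_assoc]
  exact integral_weighted_chebyshev (hIoo (wInt_integrand_nonneg hF₁ ha))
    (hIoo (wInt_integrand_nonneg hF₂ hb)) (hIoo fun u hu => hIoo (hsync u hu))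
    ha₁ haf hag hafg hb₁ hbf hbg hbfg

end WeightedIntegral

theorem weighted_chebyshev_three_weights_two_kernels_general (k t : ℝ) (ht : 0 < t)
    (F₁ F₂ f g r p q : ℝ → ℝ)
    (hF₁ : ∀ τ ∈ Set.Ioo (0:ℝ) t, 0 ≤ F₁ τ)
    (hF₂ : ∀ τ ∈ Set.Ioo (0:ℝ) t, 0 ≤ F₂ τ)
    (hsync : ∀ u v : ℝ, 0 ≤ u → 0 ≤ v → 0 ≤ (f u - f v) * (g u - g v))
    (hr : ∀ u : ℝ, 0 ≤ u → 0 ≤ r u) (hp : ∀ u : ℝ, 0 ≤ u → 0 ≤ p u)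
    (hq : ∀ u : ℝ, 0 ≤ u → 0 ≤ q u)
    (hint : ∀ φ ∈ [r, p, q, fun τ => q τ * f τ * g τ, fun τ => p τ * f τ * g τ,
        fun τ => r τ * f τ * g τ, fun τ => p τ * f τ, fun τ => q τ * g τ,
        fun τ => q τ * f τ, fun τ => p τ * g τ, fun τ => r τ * f τ,
        fun τ => r τ * g τ], wIntble k t F₁ φ ∧ wIntble k t F₂ φ) :
    wInt k t F₁ r * (wInt k t F₁ q * wInt k t F₂ (fun τ => p τ * f τ * g τ) +
        2 * wInt k t F₁ p * wInt k t F₂ (fun τ => q τ * f τ * g τ) +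
        wInt k t F₂ q * wInt k t F₁ (fun τ => p τ * f τ * g τ)) +
      (wInt k t F₁ p * wInt k t F₂ q + wInt k t F₂ p * wInt k t F₁ q) *
        wInt k t F₁ (fun τ => r τ * f τ * g τ) ≥
    wInt k t F₁ r * (wInt k t F₁ (fun τ => p τ * f τ) * wInt k t F₂ (fun τ => q τ * g τ) +
        wInt k t F₂ (fun τ => q τ * f τ) * wInt k t F₁ (fun τ => p τ * g τ)) +
      wInt k t F₁ p * (wInt k t F₁ (fun τ => r τ * f τ) * wInt k t F₂ (fun τ => q τ * g τ) +
        wInt k t F₂ (fun τ => q τ * f τ) * wInt k t F₁ (fun τ => r τ * g τ)) +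
      wInt k t F₁ q * (wInt k t F₁ (fun τ => r τ * f τ) * wInt k t F₂ (fun τ => p τ * g τ) +
        wInt k t F₂ (fun τ => p τ * f τ) * wInt k t F₁ (fun τ => r τ * g τ)) := by
  simp only [List.forall_mem_cons] at hint
  obtain ⟨⟨hr₁, -⟩, ⟨hp₁, hp₂⟩, ⟨-, hq₂⟩, ⟨-, hqfg₂⟩, ⟨hpfg₁, hpfg₂⟩, ⟨hrfg₁, -⟩, ⟨hpf₁, hpf₂⟩,
    ⟨-, hqg₂⟩, ⟨-, hqf₂⟩, ⟨hpg₁, hpg₂⟩, ⟨hrf₁, -⟩, ⟨hrg₁, -⟩, -⟩ := hint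
  have hIoo {φ : ℝ → ℝ} (h : ∀ u, 0 ≤ u → 0 ≤ φ u) : ∀ τ ∈ Ioo 0 t, 0 ≤ φ τ :=
    fun τ hτ => h τ hτ.1.le
  have hsync' : ∀ u ∈ Ioo 0 t, ∀ v ∈ Ioo 0 t, 0 ≤ (f u - f v) * (g u - g v) :=
    fun u hu v hv => hsync u v hu.1.le hv.1.le
  have hpq := wInt_chebyshev ht.le hF₁ hF₂ hsync' (hIoo hp) (hIoo hq)
    hp₁ hpf₁ hpg₁ hpfg₁ hq₂ hqf₂ hqg₂ hqfg₂
  have hrq := wInt_chebyshev ht.le hF₁ hF₂ hsync' (hIoo hr) (hIoo hq)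
    hr₁ hrf₁ hrg₁ hrfg₁ hq₂ hqf₂ hqg₂ hqfg₂
  have hrp := wInt_chebyshev ht.le hF₁ hF₂ hsync' (hIoo hr) (hIoo hp)
    hr₁ hrf₁ hrg₁ hrfg₁ hp₂ hpf₂ hpg₂ hpfg₂
  linarith [mul_le_mul_of_nonneg_left hpq (wInt_nonneg (k := k) ht.le hF₁ (hIoo hr)),
    mul_le_mul_of_nonneg_left hrq (wInt_nonneg (k := k) ht.le hF₁ (hIoo hp)),
    mul_le_mul_of_nonneg_left hrp (wInt_nonneg (k := k) ht.le hF₁ (hIoo hq))]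

theorem weighted_chebyshev_three_weights_two_kernels (k t : ℝ) (hk : 0 ≤ k) (ht : 0 < t)
    (F₁ F₂ f g r p q : ℝ → ℝ)
    (hF₁ : ∀ τ ∈ Set.Ioo (0:ℝ) t, 0 ≤ F₁ τ)
    (hF₂ : ∀ τ ∈ Set.Ioo (0:ℝ) t, 0 ≤ F₂ τ)
    (hsync : ∀ u v : ℝ, 0 ≤ u → 0 ≤ v → 0 ≤ (f u - f v) * (g u - g v))
    (hr : ∀ u : ℝ, 0 ≤ u → 0 ≤ r u) (hp : ∀ u : ℝ, 0 ≤ u → 0 ≤ p u)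
    (hq : ∀ u : ℝ, 0 ≤ u → 0 ≤ q u)
    (hint : ∀ φ ∈ [r, p, q, fun τ => q τ * f τ * g τ, fun τ => p τ * f τ * g τ,
        fun τ => r τ * f τ * g τ, fun τ => p τ * f τ, fun τ => q τ * g τ,
        fun τ => q τ * f τ, fun τ => p τ * g τ, fun τ => r τ * f τ,
        fun τ => r τ * g τ], wIntble k t F₁ φ ∧ wIntble k t F₂ φ) :
    wInt k t F₁ r * (wInt k t F₁ q * wInt k t F₂ (fun τ => p τ * f τ * g τ) +
        2 * wInt k t F₁ p * wInt k t F₂ (fun τ => q τ * f τ * g τ) +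
        wInt k t F₂ q * wInt k t F₁ (fun τ => p τ * f τ * g τ)) +
      (wInt k t F₁ p * wInt k t F₂ q + wInt k t F₂ p * wInt k t F₁ q) *
        wInt k t F₁ (fun τ => r τ * f τ * g τ) ≥
    wInt k t F₁ r * (wInt k t F₁ (fun τ => p τ * f τ) * wInt k t F₂ (fun τ => q τ * g τ) +
        wInt k t F₂ (fun τ => q τ * f τ) * wInt k t F₁ (fun τ => p τ * g τ)) +
      wInt k t F₁ p * (wInt k t F₁ (fun τ => r τ * f τ) * wInt k t F₂ (fun τ => q τ * g τ) +
        wInt k t F₂ (fun τ => q τ * f τ) * wInt k t F₁ (fun τ => r τ * g τ)) +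
      wInt k t F₁ q * (wInt k t F₁ (fun τ => r τ * f τ) * wInt k t F₂ (fun τ => p τ * g τ) +
        wInt k t F₂ (fun τ => p τ * f τ) * wInt k t F₁ (fun τ => r τ * g τ)) :=
  weighted_chebyshev_three_weights_two_kernels_general k t ht F₁ F₂ f g r p q hF₁ hF₂ hsync hr hp hq
    hint
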